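/- For all natural numbers n₁, n₂, m₁, m₂ with n₁ ≥ 1, n₂ ≥ 1, m₁ ≥ 1, m₂ ≥ 1, the degree of the ribbon Zhang–Zhang polynomial (i.e., the Clar number of the ribbon Rb(n₁,n₂,m₁,m₂)) satisfies natDegree(ZZRb(n₁,n₂,m₁,m₂)) = max(Cl_s, Cl_r), where Cl_s = max over k ∈ {0,1,…,min(n₁,m₁)} of ( min(m₁−k, n₂+k) + min(n₁−k, m₂+k) ), and Cl_r = max over k ∈ {1,…,min(n₁,m₁)} of ( 1 + min(m₁−k, n₂+k−1) + min(n₁−k, m₂+k−1) ). -/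

import Mathlib

open Polynomial Finset

noncomputable def ZZM (m n : ℕ) : Polynomial ℤ :=
  ∑ j ∈ Finset.range (min m n + 1),
    Polynomial.C ((m.choose j : ℤ) * (n.choose j : ℤ)) * (1 + Polynomial.X) ^ j

noncomputable def ZZRb (n₁ n₂ m₁ m₂ : ℕ) : Polynomial ℤ :=
  (∑ k ∈ Finset.range (min n₁ m₁ + 1), ZZM (m₁ - k) (n₂ + k) * ZZM (m₂ + k) (n₁ - k))
  + Polynomial.X *
    ∑ k ∈ Finset.Icc 1 (min n₁ m₁), ZZM (m₁ - k) (n₂ + k - 1) * ZZM (m₂ + k - 1) (n₁ - k)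

/-!
Polynomials with nonnegative coefficients cannot cancel leading terms, so the degree of a sum
of such polynomials is the largest degree of a summand. Each `ZZM m n` is such a sum, of
`C(m,j) C(n,j) (1+X)^j` for `j ≤ min m n`, hence has degree `min m n`; `ZZRb` is in turn such
a sum of products of `ZZM`s (shifted by `X` in its second part), so its degree is the maximum
of the degrees of those products.
-/

namespace Polynomial

variable {R : Type*} [Semiring R]

theorem one_add_X_ne_zero [Nontrivial R] : (1 + X : R[X]) ≠ 0 := by
  rw [add_comm, ← C_1]; exact X_add_C_ne_zero 1

theorem natDegree_one_add_X_pow [Nontrivial R] [NoZeroDivisors R] (j : ℕ) :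
    ((1 + X : R[X]) ^ j).natDegree = j := by
  rw [natDegree_pow, add_comm, ← C_1, natDegree_X_add_C, mul_one]

section OrderedRing

variable [PartialOrder R] [IsOrderedRing R]

variable (R) in
def nonnegCoeffs : Subsemiring R[X] where
  carrier := {p | ∀ n, 0 ≤ p.coeff n}
  zero_mem' _ := by simp
  one_mem' n := by rw [coeff_one]; split_ifs <;> simp
  add_mem' hp hq n := by rw [coeff_add]; exact add_nonneg (hp n) (hq n)
  mul_mem' hp hq n := by
    rw [coeff_mul]; exact sum_nonneg fun x _ => mul_nonneg (hp _) (hq _)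

theorem C_mem_nonnegCoeffs {a : R} (ha : 0 ≤ a) : C a ∈ nonnegCoeffs R := fun n => by
  rw [coeff_C]; split_ifs <;> simp [ha]

theorem X_mem_nonnegCoeffs : (X : R[X]) ∈ nonnegCoeffs R := fun n => by
  rw [coeff_X]; split_ifs <;> simp

theorem sum_ne_zero_of_mem_nonnegCoeffs {ι : Type*} {s : Finset ι} {f : ι → R[X]}
    (hf : ∀ i ∈ s, f i ∈ nonnegCoeffs R) {i : ι} (hi : i ∈ s) (hfi : f i ≠ 0) :
    ∑ i ∈ s, f i ≠ 0 := by
  intro hsum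
  have hle : (f i).leadingCoeff ≤ (∑ i ∈ s, f i).coeff (f i).natDegree := by
    rw [finsetSum_coeff]; exact single_le_sum (fun j hj => hf j hj _) hi
  rw [hsum, coeff_zero] at hle
  exact leadingCoeff_ne_zero.mpr hfi (le_antisymm hle (hf i hi _))

end OrderedRing

section StrictOrderedRing

variable [PartialOrder R] [IsStrictOrderedRing R]

theorem natDegree_le_natDegree_add_of_mem_nonnegCoeffs {p q : R[X]}
    (hp : p ∈ nonnegCoeffs R) (hq : q ∈ nonnegCoeffs R) : p.natDegree ≤ (p + q).natDegree := by
  rcases eq_or_ne p 0 with rfl | hp0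
  · simp
  have hlc : 0 < p.leadingCoeff := (hp _).lt_of_ne' (leadingCoeff_ne_zero.mpr hp0)
  refine le_natDegree_of_ne_zero (ne_of_gt ?_)
  rw [coeff_add]
  exact add_pos_of_pos_of_nonneg hlc (hq _)

theorem natDegree_add_of_mem_nonnegCoeffs {p q : R[X]}
    (hp : p ∈ nonnegCoeffs R) (hq : q ∈ nonnegCoeffs R) :
    (p + q).natDegree = max p.natDegree q.natDegree :=
  le_antisymm (natDegree_add_le p q) <| max_le
    (natDegree_le_natDegree_add_of_mem_nonnegCoeffs hp hq)
    (add_comm p q ▸ natDegree_le_natDegree_add_of_mem_nonnegCoeffs hq hp)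

theorem natDegree_sum_of_mem_nonnegCoeffs {ι : Type*} [DecidableEq ι] {s : Finset ι}
    {f : ι → R[X]} (hf : ∀ i ∈ s, f i ∈ nonnegCoeffs R) :
    (∑ i ∈ s, f i).natDegree = s.sup fun i => (f i).natDegree := by
  induction s using Finset.induction_on with
  | empty => simp
  | insert i s hi ih =>
    rw [sum_insert hi, sup_insert, natDegree_add_of_mem_nonnegCoeffs (hf i (mem_insert_self i s))
      (sum_mem fun j hj => hf j (mem_insert_of_mem hj)),
      ih fun j hj => hf j (mem_insert_of_mem hj)]

end StrictOrderedRing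

end Polynomial

theorem choose_mul_choose_ne_zero {m n j : ℕ} (hj : j ≤ min m n) :
    (m.choose j : ℤ) * (n.choose j : ℤ) ≠ 0 := by
  have := Nat.choose_pos (hj.trans (min_le_left m n))
  have := Nat.choose_pos (hj.trans (min_le_right m n))
  positivity

theorem ZZM_term_mem_nonnegCoeffs (m n j : ℕ) :
    C ((m.choose j : ℤ) * (n.choose j : ℤ)) * (1 + X) ^ j ∈ nonnegCoeffs ℤ :=
  mul_mem (C_mem_nonnegCoeffs (by positivity))
    (pow_mem (add_mem (one_mem _) X_mem_nonnegCoeffs) j)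

theorem ZZM_term_ne_zero {m n j : ℕ} (hj : j ≤ min m n) :
    C ((m.choose j : ℤ) * (n.choose j : ℤ)) * (1 + X) ^ j ≠ 0 :=
  mul_ne_zero (C_ne_zero.mpr (choose_mul_choose_ne_zero hj))
    (pow_ne_zero j one_add_X_ne_zero)

theorem natDegree_ZZM_term {m n j : ℕ} (hj : j ≤ min m n) :
    (C ((m.choose j : ℤ) * (n.choose j : ℤ)) * (1 + X) ^ j).natDegree = j := by
  rw [natDegree_C_mul (choose_mul_choose_ne_zero hj), natDegree_one_add_X_pow]

theorem ZZM_mem_nonnegCoeffs (m n : ℕ) : ZZM m n ∈ nonnegCoeffs ℤ :=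
  sum_mem fun j _ => ZZM_term_mem_nonnegCoeffs m n j

theorem ZZM_ne_zero (m n : ℕ) : ZZM m n ≠ 0 :=
  sum_ne_zero_of_mem_nonnegCoeffs (fun j _ => ZZM_term_mem_nonnegCoeffs m n j)
    (mem_range.mpr (Nat.succ_pos _)) (ZZM_term_ne_zero (Nat.zero_le _))

theorem natDegree_ZZM (m n : ℕ) : (ZZM m n).natDegree = min m n := by
  rw [ZZM, natDegree_sum_of_mem_nonnegCoeffs fun j _ => ZZM_term_mem_nonnegCoeffs m n j,
    sup_congr rfl fun j hj => natDegree_ZZM_term (Nat.lt_succ_iff.mp (mem_range.mp hj))]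
  exact le_antisymm (Finset.sup_le fun j hj => Nat.lt_succ_iff.mp (mem_range.mp hj))
    (le_sup (f := fun j => j) (self_mem_range_succ _))

theorem natDegree_ZZM_mul_ZZM (a b c d : ℕ) :
    (ZZM a b * ZZM c d).natDegree = min a b + min d c := by
  rw [natDegree_mul (ZZM_ne_zero a b) (ZZM_ne_zero c d), natDegree_ZZM, natDegree_ZZM, min_comm c]

theorem zzrb_natDegree_general (n₁ n₂ m₁ m₂ : ℕ) :
    (ZZRb n₁ n₂ m₁ m₂).natDegree =
      max
        ((Finset.range (min n₁ m₁ + 1)).sup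
          (fun k => min (m₁ - k) (n₂ + k) + min (n₁ - k) (m₂ + k)))
        ((Finset.Icc 1 (min n₁ m₁)).sup
          (fun k => 1 + min (m₁ - k) (n₂ + k - 1) + min (n₁ - k) (m₂ + k - 1))) := by
  have hprod (a b c d : ℕ) : ZZM a b * ZZM c d ∈ nonnegCoeffs ℤ :=
    mul_mem (ZZM_mem_nonnegCoeffs a b) (ZZM_mem_nonnegCoeffs c d)
  rw [ZZRb, mul_sum, natDegree_add_of_mem_nonnegCoeffs (sum_mem fun _ _ => hprod _ _ _ _)
      (sum_mem fun _ _ => mul_mem X_mem_nonnegCoeffs (hprod _ _ _ _)),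
    natDegree_sum_of_mem_nonnegCoeffs fun _ _ => hprod _ _ _ _,
    natDegree_sum_of_mem_nonnegCoeffs fun _ _ => mul_mem X_mem_nonnegCoeffs (hprod _ _ _ _)]
  congr 1 <;> refine sup_congr rfl fun k _ => ?_
  · exact natDegree_ZZM_mul_ZZM _ _ _ _
  · rw [natDegree_X_mul (mul_ne_zero (ZZM_ne_zero _ _) (ZZM_ne_zero _ _)),
      natDegree_ZZM_mul_ZZM]
    ring

theorem zzrb_natDegree (n₁ n₂ m₁ m₂ : ℕ)
    (hn₁ : 1 ≤ n₁) (hn₂ : 1 ≤ n₂) (hm₁ : 1 ≤ m₁) (hm₂ : 1 ≤ m₂) :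
    (ZZRb n₁ n₂ m₁ m₂).natDegree =
      max
        ((Finset.range (min n₁ m₁ + 1)).sup
          (fun k => min (m₁ - k) (n₂ + k) + min (n₁ - k) (m₂ + k)))
        ((Finset.Icc 1 (min n₁ m₁)).sup
          (fun k => 1 + min (m₁ - k) (n₂ + k - 1) + min (n₁ - k) (m₂ + k - 1))) :=
  zzrb_natDegree_general n₁ n₂ m₁ m₂
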